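/- arXiv:2601.00781 — 6 statements merged into one kernel-verified Lean document; each statement's English description precedes it below -/
import Mathlib

section
/- Let K ≥ 1, θ ∈ ℝ^K, x ∈ ℝ^K, α ∈ ℝ and σ > 0, and set p = softmax(θ). Then for every j ∈ {1,…,K}, the Gaussian-posterior weight p_j · exp(−‖x − α·e_j‖²/(2σ²)) / (∑_{k=1}^K p_k · exp(−‖x − α·e_k‖²/(2σ²))) equals softmax(θ + (α/σ²)·x)_j. In particular the posterior-mean denoiser of a categorical distribution on one-hot vectors under isotropic Gaussian noise is given in closed form by x̂₀(x) = softmax(θ + (α/σ²)·x). -/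
noncomputable def softmax {K : ℕ} (θ : Fin K → ℝ) : Fin K → ℝ :=
  fun i => Real.exp (θ i) / ∑ k, Real.exp (θ k)

/-- closed-form Gaussian-posterior denoiser for a categorical
distribution on one-hot vectors. -/
theorem categorical_denoiser_closed_form {K : ℕ} (hK : 1 ≤ K) (θ : Fin K → ℝ)
    (x : EuclideanSpace ℝ (Fin K)) (α σ : ℝ) (hσ : 0 < σ) (j : Fin K) :
    softmax θ j * Real.exp (-‖x - α • EuclideanSpace.single j (1 : ℝ)‖ ^ 2 / (2 * σ ^ 2)) /
        (∑ k, softmax θ k *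
          Real.exp (-‖x - α • EuclideanSpace.single k (1 : ℝ)‖ ^ 2 / (2 * σ ^ 2)))
      = softmax (fun i => θ i + (α / σ ^ 2) * x i) j := by
  have hσ2 : (σ : ℝ) ^ 2 ≠ 0 := pow_ne_zero _ hσ.ne'
  have hS : (0 : ℝ) < ∑ k, Real.exp (θ k) := by
    apply Finset.sum_pos (fun k _ => Real.exp_pos _)
    have : Nonempty (Fin K) := Fin.pos_iff_nonempty.mp hK
    exact Finset.univ_nonempty
  set C : ℝ := Real.exp (-(‖x‖ ^ 2 + α ^ 2) / (2 * σ ^ 2)) with hC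
  have key : ∀ k : Fin K,
      Real.exp (-‖x - α • EuclideanSpace.single k (1 : ℝ)‖ ^ 2 / (2 * σ ^ 2))
        = C * Real.exp ((α / σ ^ 2) * x k) := by
    intro k
    rw [hC, ← Real.exp_add]
    congr 1
    have hnorm : ‖x - α • EuclideanSpace.single k (1 : ℝ)‖ ^ 2
        = ‖x‖ ^ 2 - 2 * (α * x k) + α ^ 2 := by
      rw [norm_sub_sq_real]
      have h1 : (inner ℝ x (α • EuclideanSpace.single k (1 : ℝ)) : ℝ) = α * x k := by
        rw [real_inner_smul_right, EuclideanSpace.inner_single_right]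
        simp [mul_comm]
      have h2 : ‖α • EuclideanSpace.single k (1 : ℝ)‖ = |α| := by
        rw [norm_smul, EuclideanSpace.norm_single]
        simp
      rw [h1, h2, sq_abs]
    rw [hnorm]
    field_simp
    ring
  have hrw : ∀ k : Fin K,
      softmax θ k * Real.exp (-‖x - α • EuclideanSpace.single k (1 : ℝ)‖ ^ 2 / (2 * σ ^ 2))
        = (C / ∑ i, Real.exp (θ i)) * Real.exp (θ k + (α / σ ^ 2) * x k) := by
    intro k
    rw [key k, softmax, Real.exp_add]
    ring
  simp only [hrw]
  rw [← Finset.mul_sum, softmax]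
  have hC0 : C ≠ 0 := Real.exp_ne_zero _
  rw [mul_div_mul_left _ _ (div_ne_zero hC0 hS.ne')]
end

section
/- Let K ≥ 1, θ, x, μ ∈ ℝ^K, v ∈ ℝ^K with v_i > 0 for all i, α ∈ ℝ and σ > 0, and set p = softmax(θ). Then for every j ∈ {1,…,K}, the weight p_j · exp(−∑_{i=1}^K (x_i − α·(e_j)_i − σ·μ_i)²/(2σ²·v_i)) / (∑_{k=1}^K p_k · exp(−∑_{i=1}^K (x_i − α·(e_k)_i − σ·μ_i)²/(2σ²·v_i))) equals softmax(θ + (α/σ²)·λ ⊙ (x − σ·μ − (α/2)·𝟏))_j, where λ ∈ ℝ^K has entries λ_i = 1/v_i, ⊙ is the coordinatewise product, and 𝟏 is the all-ones vector. -/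
/-- closed-form denoiser for a categorical distribution on one-hot
vectors when the reference distribution is Gaussian with mean `μ` and diagonal
covariance `Diag(v)`. -/
theorem categorical_denoiser_diagonal_reference {K : ℕ} (hK : 1 ≤ K)
    (θ x μ v : Fin K → ℝ) (hv : ∀ i, 0 < v i) (α σ : ℝ) (hσ : 0 < σ) (j : Fin K) :
    softmax θ j *
        Real.exp (-(∑ i, (x i - α * ((Pi.single j 1 : Fin K → ℝ) i) - σ * μ i) ^ 2 / (2 * σ ^ 2 * v i))) /
      (∑ k, softmax θ k *
        Real.exp (-(∑ i, (x i - α * ((Pi.single k 1 : Fin K → ℝ) i) - σ * μ i) ^ 2 / (2 * σ ^ 2 * v i))))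
      = softmax (fun i => θ i + (α / σ ^ 2) * (1 / v i) * (x i - σ * μ i - α / 2)) j := by
  have hσ' : σ ≠ 0 := ne_of_gt hσ
  set g : Fin K → ℝ := fun i => (α / σ ^ 2) * (1 / v i) * (x i - σ * μ i - α / 2) with hg
  set C : ℝ := ∑ i, (x i - σ * μ i) ^ 2 / (2 * σ ^ 2 * v i) with hC
  have key : ∀ k : Fin K,
      (∑ i, (x i - α * ((Pi.single k 1 : Fin K → ℝ) i) - σ * μ i) ^ 2 / (2 * σ ^ 2 * v i))
        = C - g k := by
    intro k
    have h1 : ∑ i, ((x i - α * ((Pi.single k 1 : Fin K → ℝ) i) - σ * μ i) ^ 2 / (2 * σ ^ 2 * v i)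
        - (x i - σ * μ i) ^ 2 / (2 * σ ^ 2 * v i)) = -(g k) := by
      rw [Finset.sum_eq_single k]
      · have hvk : (v k) ≠ 0 := ne_of_gt (hv k)
        simp only [Pi.single_eq_same, hg]
        field_simp
        ring
      · intro i _ hik
        simp [Pi.single_eq_of_ne hik]
      · intro h; exact absurd (Finset.mem_univ k) h
    have h2 := Finset.sum_sub_distrib (s := Finset.univ)
      (f := fun i => (x i - α * ((Pi.single k 1 : Fin K → ℝ) i) - σ * μ i) ^ 2 / (2 * σ ^ 2 * v i))
      (g := fun i => (x i - σ * μ i) ^ 2 / (2 * σ ^ 2 * v i))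
    rw [h2] at h1
    linarith
  have hZ : (0:ℝ) < ∑ k, Real.exp (θ k) :=
    Finset.sum_pos (fun k _ => Real.exp_pos _) ⟨j, Finset.mem_univ j⟩
  have hS : (0:ℝ) < ∑ k, Real.exp (θ k + g k) :=
    Finset.sum_pos (fun k _ => Real.exp_pos _) ⟨j, Finset.mem_univ j⟩
  have hexp : ∀ k : Fin K, Real.exp (-(C - g k)) = Real.exp (-C) * Real.exp (g k) := by
    intro k; rw [← Real.exp_add]; ring_nf
  have hsum : ∑ k, Real.exp (θ k) / (∑ l, Real.exp (θ l)) *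
      (Real.exp (-C) * Real.exp (g k))
      = Real.exp (-C) / (∑ l, Real.exp (θ l)) * ∑ k, Real.exp (θ k) * Real.exp (g k) := by
    rw [Finset.mul_sum]
    apply Finset.sum_congr rfl
    intro k _
    ring
  have hS' : (0:ℝ) < ∑ k, Real.exp (θ k) * Real.exp (g k) := by
    apply Finset.sum_pos (fun k _ => mul_pos (Real.exp_pos _) (Real.exp_pos _))
      ⟨j, Finset.mem_univ j⟩
  simp only [softmax, key, hexp, Real.exp_add, hsum]
  have hE : (0:ℝ) < Real.exp (-C) := Real.exp_pos _
  rw [div_eq_div_iff (mul_pos (div_pos hE hZ) hS').ne' hS'.ne']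
  ring
end

section
/- Let K ≥ 2, θ ∈ ℝ^K, and x ∈ ℝ^K \ H with margin m(x). Let B(θ) = max_{i,j} |θ_i − θ_j| and, for c > 0, set p(c) = softmax(θ + c·x) and Σ(c) = Diag(p(c)) − p(c)·p(c)ᵀ. Then for every c > 0 with c·m(x) ≥ 2·B(θ), the operator norm satisfies ‖Σ(c)‖ ≤ 2K(K−1)·exp(−m(x)·c/2). In particular, the covariance of the posterior categorical distribution, and hence the Jacobians of the last DDIM denoising step, decay exponentially in c outside the decision boundary. -/
lemma opNorm_toEuclideanLin_le {K : ℕ} (A : Matrix (Fin K) (Fin K) ℝ)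
    (C : ℝ) (hC : 0 ≤ C) (h : ∑ i, ∑ j, |A i j| ≤ C) :
    ‖LinearMap.toContinuousLinearMap (Matrix.toEuclideanLin A)‖ ≤ C := by
  apply ContinuousLinearMap.opNorm_le_bound _ hC
  intro v
  have hv : ∀ j, |v j| ≤ ‖v‖ := by
    intro j
    rw [EuclideanSpace.norm_eq]
    have h1 : |v j| = Real.sqrt (‖v j‖ ^ 2) := by
      rw [Real.sqrt_sq_eq_abs]; simp [Real.norm_eq_abs]
    rw [h1]
    exact Real.sqrt_le_sqrt (Finset.single_le_sum (f := fun i => ‖v i‖ ^ 2) (fun i _ => by positivity) (Finset.mem_univ j))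
  have hTv : (LinearMap.toContinuousLinearMap (Matrix.toEuclideanLin A)) v
      = (WithLp.equiv 2 (Fin K → ℝ)).symm (A.mulVec ((WithLp.equiv 2 (Fin K → ℝ)) v)) := rfl
  rw [hTv, EuclideanSpace.norm_eq]
  have step1 : Real.sqrt (∑ i, ‖(WithLp.equiv 2 (Fin K → ℝ)).symm
        (A.mulVec ((WithLp.equiv 2 (Fin K → ℝ)) v)) i‖ ^ 2)
      ≤ ∑ i, ‖(A.mulVec ((WithLp.equiv 2 (Fin K → ℝ)) v)) i‖ := by
    have : ∑ i, ‖(A.mulVec ((WithLp.equiv 2 (Fin K → ℝ)) v)) i‖ ^ 2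
        ≤ (∑ i, ‖(A.mulVec ((WithLp.equiv 2 (Fin K → ℝ)) v)) i‖) ^ 2 :=
      Finset.sum_sq_le_sq_sum_of_nonneg (fun i _ => norm_nonneg _)
    calc Real.sqrt (∑ i, ‖(WithLp.equiv 2 (Fin K → ℝ)).symm
          (A.mulVec ((WithLp.equiv 2 (Fin K → ℝ)) v)) i‖ ^ 2)
        ≤ Real.sqrt ((∑ i, ‖(A.mulVec ((WithLp.equiv 2 (Fin K → ℝ)) v)) i‖) ^ 2) :=
          Real.sqrt_le_sqrt this
      _ = ∑ i, ‖(A.mulVec ((WithLp.equiv 2 (Fin K → ℝ)) v)) i‖ :=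
          Real.sqrt_sq (Finset.sum_nonneg fun i _ => norm_nonneg _)
  refine step1.trans ?_
  have step2 : ∑ i, ‖(A.mulVec ((WithLp.equiv 2 (Fin K → ℝ)) v)) i‖
      ≤ ∑ i, ∑ j, |A i j| * ‖v‖ := by
    refine Finset.sum_le_sum fun i _ => ?_
    have : ‖(A.mulVec ((WithLp.equiv 2 (Fin K → ℝ)) v)) i‖ = |∑ j, A i j * v j| := by
      simp [Matrix.mulVec, dotProduct, Real.norm_eq_abs]
    rw [this]
    calc |∑ j, A i j * v j| ≤ ∑ j, |A i j * v j| := Finset.abs_sum_le_sum_abs _ _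
      _ ≤ ∑ j, |A i j| * ‖v‖ := Finset.sum_le_sum fun j _ => by
          rw [abs_mul]; exact mul_le_mul_of_nonneg_left (hv j) (abs_nonneg _)
  refine step2.trans ?_
  calc ∑ i, ∑ j, |A i j| * ‖v‖ = (∑ i, ∑ j, |A i j|) * ‖v‖ := by
        simp [Finset.sum_mul]
    _ ≤ C * ‖v‖ := mul_le_mul_of_nonneg_right h (norm_nonneg v)


/-- Union of decision boundaries: points whose maximal coordinate is attained at least twice. -/
def Hset (K : ℕ) : Set (Fin K → ℝ) :=
  {x | ∃ j k : Fin K, j ≠ k ∧ x j = ⨆ i, x i ∧ x k = ⨆ i, x i}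

/-- exponential decay of the posterior covariance outside the decision
boundary.  With `p(c) = softmax(θ + c x)` and `Σ(c) = Diag(p(c)) − p(c) p(c)ᵀ`, if
`c·m(x) ≥ 2·B(θ)` then the Euclidean operator norm of `Σ(c)` is at most
`2K(K−1)·exp(−m(x)·c/2)`. -/
theorem covariance_exponential_decay {K : ℕ} (hK : 2 ≤ K) (θ x : Fin K → ℝ)
    (hx : x ∉ Hset K) (k : Fin K) (hk : ∀ i, x i ≤ x k) (c : ℝ) (hc : 0 < c)
    (hcm : 2 * (⨆ q : Fin K × Fin K, |θ q.1 - θ q.2|)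
      ≤ c * (⨅ j : {j : Fin K // j ≠ k}, (x k - x j.1))) :
    ‖LinearMap.toContinuousLinearMap
        (Matrix.toEuclideanLin
          (Matrix.diagonal (softmax (fun i => θ i + c * x i)) -
            Matrix.vecMulVec (softmax (fun i => θ i + c * x i))
              (softmax (fun i => θ i + c * x i))))‖
      ≤ 2 * K * ((K : ℝ) - 1) *
        Real.exp (-(⨅ j : {j : Fin K // j ≠ k}, (x k - x j.1)) * c / 2) := by
  classical
  haveI : Nonempty (Fin K) := ⟨k⟩
  set p : Fin K → ℝ := softmax (fun i => θ i + c * x i) with hp_def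
  set m : ℝ := ⨅ j : {j : Fin K // j ≠ k}, (x k - x j.1) with hm_def
  set B : ℝ := ⨆ q : Fin K × Fin K, |θ q.1 - θ q.2| with hB_def
  set E : ℝ := Real.exp (-m * c / 2) with hE_def
  have hE_pos : 0 < E := Real.exp_pos _
  have hKpos : (0:ℕ) < K := by omega
  have hne : Nonempty {j : Fin K // j ≠ k} := by
    obtain ⟨i, hi⟩ := Fintype.exists_ne_of_one_lt_card (by rw [Fintype.card_fin]; omega) k
    exact ⟨⟨i, hi⟩⟩
  -- basic facts about p
  have hZ : 0 < ∑ i, Real.exp (θ i + c * x i) :=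
    Finset.sum_pos (fun i _ => Real.exp_pos _) Finset.univ_nonempty
  have hp_pos : ∀ i, 0 < p i := fun i => div_pos (Real.exp_pos _) hZ
  have hp_le_one : ∀ i, p i ≤ 1 := by
    intro i
    rw [hp_def, softmax, div_le_one hZ]
    exact Finset.single_le_sum (f := fun j => Real.exp (θ j + c * x j))
      (fun j _ => (Real.exp_pos _).le) (Finset.mem_univ i)
  have hsum : ∑ i, p i = 1 := by
    rw [hp_def]; unfold softmax
    rw [← Finset.sum_div, div_self hZ.ne']
  -- margin facts
  have hm_le : ∀ i, i ≠ k → m ≤ x k - x i := by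
    intro i hi
    exact ciInf_le (f := fun j : {j : Fin K // j ≠ k} => x k - x j.1)
      (Finite.bddBelow_range _) ⟨i, hi⟩
  have hB_le : ∀ i, θ i - θ k ≤ B := by
    intro i
    exact (le_abs_self _).trans
      (le_ciSup (f := fun q : Fin K × Fin K => |θ q.1 - θ q.2|) (Finite.bddAbove_range _) (i, k))
  -- key exponential bound
  have key : ∀ i, i ≠ k → p i ≤ E := by
    intro i hi
    have h1 : p i ≤ Real.exp (θ i + c * x i) / Real.exp (θ k + c * x k) := by
      rw [hp_def]; unfold softmax
      exact div_le_div_of_nonneg_left (Real.exp_pos _).le (Real.exp_pos _)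
        (Finset.single_le_sum (f := fun j => Real.exp (θ j + c * x j))
          (fun j _ => (Real.exp_pos _).le) (Finset.mem_univ k))
    rw [← Real.exp_sub] at h1
    refine h1.trans (Real.exp_le_exp.mpr ?_)
    have h2 : m ≤ x k - x i := hm_le i hi
    have h3 : c * m ≤ c * (x k - x i) := mul_le_mul_of_nonneg_left h2 hc.le
    have h4 : θ i - θ k ≤ B := hB_le i
    have h5 : 2 * B ≤ c * m := hcm
    nlinarith
  -- diagonal bound at k
  have hpk : 1 - p k ≤ ((K:ℝ) - 1) * E := by
    have h1 : p k + ∑ i ∈ Finset.univ.erase k, p i = 1 := by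
      rw [Finset.add_sum_erase _ _ (Finset.mem_univ k)]; exact hsum
    have h2 : ∑ i ∈ Finset.univ.erase k, p i ≤ ∑ i ∈ Finset.univ.erase k, E :=
      Finset.sum_le_sum fun i hi => key i (Finset.ne_of_mem_erase hi)
    have h3 : ∑ i ∈ Finset.univ.erase k, (E:ℝ) = ((K:ℝ) - 1) * E := by
      rw [Finset.sum_const, Finset.card_erase_of_mem (Finset.mem_univ k),
        Finset.card_univ, Fintype.card_fin, nsmul_eq_mul]
      push_cast [Nat.cast_sub (by omega : 1 ≤ K)]
      ring
    linarith [h2.trans_eq h3]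
  -- entry bounds
  set A : Matrix (Fin K) (Fin K) ℝ :=
    Matrix.diagonal p - Matrix.vecMulVec p p with hA_def
  have hAdiag : ∀ i, |A i i| = p i * (1 - p i) := by
    intro i
    rw [hA_def]
    simp only [Matrix.sub_apply, Matrix.diagonal_apply_eq, Matrix.vecMulVec_apply]
    rw [abs_of_nonneg (by nlinarith [hp_pos i, hp_le_one i])]
    ring
  have hAoff : ∀ i j, i ≠ j → |A i j| = p i * p j := by
    intro i j hij
    rw [hA_def]
    simp only [Matrix.sub_apply, Matrix.diagonal_apply_ne _ hij, Matrix.vecMulVec_apply]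
    rw [abs_of_nonpos (by nlinarith [hp_pos i, hp_pos j])]
    ring
  -- row sums
  have row_ne : ∀ i, i ≠ k → ∑ j, |A i j| ≤ (K:ℝ) * E := by
    intro i hi
    have h1 : ∀ j, |A i j| ≤ p i := by
      intro j
      by_cases hij : i = j
      · subst hij; rw [hAdiag]; nlinarith [hp_pos i, hp_le_one i]
      · rw [hAoff i j hij]; nlinarith [hp_pos i, hp_pos j, hp_le_one j]
    calc ∑ j, |A i j| ≤ ∑ j : Fin K, p i := Finset.sum_le_sum fun j _ => h1 j
      _ = (K:ℝ) * p i := by simp [Finset.card_univ, mul_comm]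
      _ ≤ (K:ℝ) * E := mul_le_mul_of_nonneg_left (key i hi) (by positivity)
  have row_k : ∑ j, |A k j| ≤ 2 * ((K:ℝ) - 1) * E := by
    have h1 : |A k k| ≤ ((K:ℝ) - 1) * E := by
      rw [hAdiag]
      calc p k * (1 - p k) ≤ 1 * (1 - p k) :=
            mul_le_mul_of_nonneg_right (hp_le_one k) (by linarith [hp_le_one k])
        _ = 1 - p k := one_mul _
        _ ≤ ((K:ℝ) - 1) * E := hpk
    have h2 : ∑ j ∈ Finset.univ.erase k, |A k j| ≤ ((K:ℝ) - 1) * E := by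
      have : ∀ j ∈ Finset.univ.erase k, |A k j| ≤ E := by
        intro j hj
        have hjk : j ≠ k := Finset.ne_of_mem_erase hj
        rw [hAoff k j (Ne.symm hjk)]
        calc p k * p j ≤ 1 * p j :=
              mul_le_mul_of_nonneg_right (hp_le_one k) (hp_pos j).le
          _ = p j := one_mul _
          _ ≤ E := key j hjk
      calc ∑ j ∈ Finset.univ.erase k, |A k j| ≤ ∑ j ∈ Finset.univ.erase k, E :=
            Finset.sum_le_sum this
        _ = ((K:ℝ) - 1) * E := by
            rw [Finset.sum_const, Finset.card_erase_of_mem (Finset.mem_univ k),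
              Finset.card_univ, Fintype.card_fin, nsmul_eq_mul]
            push_cast [Nat.cast_sub (by omega : 1 ≤ K)]
            ring
    have h3 : ∑ j, |A k j| = |A k k| + ∑ j ∈ Finset.univ.erase k, |A k j| :=
      (Finset.add_sum_erase _ _ (Finset.mem_univ k)).symm
    rw [h3]; linarith
  -- total sum
  have total : ∑ i, ∑ j, |A i j| ≤ 2 * (K:ℝ) * ((K:ℝ) - 1) * E := by
    have h3 : ∑ i, ∑ j, |A i j|
        = (∑ j, |A k j|) + ∑ i ∈ Finset.univ.erase k, ∑ j, |A i j| :=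
      (Finset.add_sum_erase _ _ (Finset.mem_univ k)).symm
    have h4 : ∑ i ∈ Finset.univ.erase k, ∑ j, |A i j|
        ≤ ∑ i ∈ Finset.univ.erase k, ((K:ℝ) * E) :=
      Finset.sum_le_sum fun i hi => row_ne i (Finset.ne_of_mem_erase hi)
    have h5 : ∑ i ∈ Finset.univ.erase k, ((K:ℝ) * E) = ((K:ℝ) - 1) * ((K:ℝ) * E) := by
      rw [Finset.sum_const, Finset.card_erase_of_mem (Finset.mem_univ k),
        Finset.card_univ, Fintype.card_fin, nsmul_eq_mul]
      push_cast [Nat.cast_sub (by omega : 1 ≤ K)]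
      ring
    have hK2 : (2:ℝ) ≤ (K:ℝ) := by exact_mod_cast hK
    rw [h3]
    have h6 := h4.trans_eq h5
    have h7 : 2 * ((K:ℝ) - 1) * E + ((K:ℝ) - 1) * ((K:ℝ) * E)
        ≤ 2 * (K:ℝ) * ((K:ℝ) - 1) * E := by
      nlinarith [mul_nonneg (mul_nonneg (by linarith : (0:ℝ) ≤ (K:ℝ) - 1)
        (by linarith : (0:ℝ) ≤ (K:ℝ) - 2)) hE_pos.le]
    linarith
  have hK2 : (2:ℝ) ≤ (K:ℝ) := by exact_mod_cast hK
  exact opNorm_toEuclideanLin_le A _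
    (mul_nonneg (by nlinarith) (Real.exp_pos _).le) total
end

section
/- Let K ≥ 1, let p ∈ ℝ^K be a probability vector, and let g₁,…,g_K ∈ ℝ^K be arbitrary vectors. Then ∑_{i=1}^K p_i · C(p)·g_i = ∑_{i=1}^K ∑_{j=1}^K ⟨g_i, e_j − e_i⟩ · p_i · p_j · (e_j − p), where C(p) = Diag(p) − p·pᵀ and ⟨·,·⟩ is the Euclidean inner product. (With g_i = ∇f(e_i) and p = softmax(θ), the left side is the expectation of the hard Straight-Through gradient estimator and the right side is the baseline-subtracted first-order approximation ∑_{i,j} ∇f(e_i)ᵀ(e_j − e_i) ∇_θ π_θ(e_j) π_θ(e_i), since ∇_θ softmax(θ)_j = p_j(e_j − p).) -/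
open Matrix

/-- the expectation of the hard Straight-Through gradient estimator equals
the baseline-subtracted first-order approximation:
`∑ i p_i C(p) g_i = ∑_{i,j} ⟨g_i, e_j − e_i⟩ p_i p_j (e_j − p)`. -/
theorem straight_through_first_order {K : ℕ} (hK : 1 ≤ K) (p : Fin K → ℝ)
    (hp : ∀ j, 0 ≤ p j) (hsum : ∑ j, p j = 1) (g : Fin K → Fin K → ℝ) :
    ∑ i, p i • (Matrix.diagonal p - Matrix.vecMulVec p p).mulVec (g i)
      = ∑ i, ∑ j,
          ((g i ⬝ᵥ ((Pi.single j 1 : Fin K → ℝ) - Pi.single i 1)) * p i * p j) •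
            ((Pi.single j 1 : Fin K → ℝ) - p) := by
  funext k
  have hdot : ∀ i j : Fin K,
      (g i ⬝ᵥ ((Pi.single j 1 : Fin K → ℝ) - Pi.single i 1)) = g i j - g i i := by
    intro i j
    simp [dotProduct, Pi.single_apply, mul_sub, Finset.sum_sub_distrib, mul_ite,
      Finset.sum_ite_eq', eq_comm]
  have hvm : ∀ v : Fin K → ℝ, (vecMulVec p p *ᵥ v) k = p k * ∑ y, p y * v y := by
    intro v
    simp [mulVec, vecMulVec_apply, dotProduct, Finset.mul_sum, mul_assoc]
  simp only [hdot, Finset.sum_apply, Pi.smul_apply, smul_eq_mul, sub_mulVec,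
    mulVec_diagonal, Pi.sub_apply, Pi.single_apply, hvm]
  refine Finset.sum_congr rfl fun i _ => ?_
  have h2 : ∀ j : Fin K,
      (g i j - g i i) * p i * p j * ((if k = j then 1 else 0) - p k)
        = (g i j - g i i) * p i * p j * (if k = j then 1 else 0)
          - (p i * p k) * (p j * g i j) + (g i i * (p i * p k)) * p j := fun j => by ring
  simp only [h2, Finset.sum_add_distrib, Finset.sum_sub_distrib, ← Finset.mul_sum, hsum,
    mul_ite, mul_one, mul_zero, Finset.sum_ite_eq, Finset.mem_univ, if_true]
  ring
end

section
/- Let K ≥ 1, let p ∈ ℝ^K be a probability vector, let A be a symmetric K×K real matrix and b ∈ ℝ^K, and set C(p) = Diag(p) − p·pᵀ. Then ∑_{i=1}^K p_i · ½·[C(p) + (e_i − p)(e_i − p)ᵀ]·(2A·e_i + b) = C(p)·(diag(A) + b). In particular, for a quadratic function f(x) = xᵀAx + bᵀx + d with gradient ∇f(x) = 2Ax + b, the ReinMax gradient estimator ĝ(X) = ½[C(p) + (X − p)(X − p)ᵀ]∇f(X), with X drawn from the categorical distribution on one-hot vectors with probability vector p, is an unbiased estimator of the exact gradient C(p)(diag(A)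 + b) of the discrete expectation of f. -/
open Matrix

/-- ReinMax is unbiased for quadratic functions.  For a probability vector
`p`, a symmetric matrix `A` and `b ∈ ℝ^K`, the expectation of the ReinMax estimator
`½[C(p) + (e_i − p)(e_i − p)ᵀ](2A e_i + b)` under `p` equals `C(p)(diag(A) + b)`. -/
theorem reinmax_unbiased_quadratic {K : ℕ} (hK : 1 ≤ K) (p : Fin K → ℝ)
    (hp : ∀ j, 0 ≤ p j) (hsum : ∑ j, p j = 1)
    (A : Matrix (Fin K) (Fin K) ℝ) (hA : A.IsSymm) (b : Fin K → ℝ) :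
    ∑ i, p i •
        ((2⁻¹ : ℝ) •
          ((Matrix.diagonal p - Matrix.vecMulVec p p) +
            Matrix.vecMulVec ((Pi.single i 1 : Fin K → ℝ) - p)
              ((Pi.single i 1 : Fin K → ℝ) - p))).mulVec
          ((2 : ℝ) • A.mulVec (Pi.single i 1) + b)
      = (Matrix.diagonal p - Matrix.vecMulVec p p).mulVec (fun i => A i i + b i) := by
  funext k
  have hAs : ∀ i j, A i j = A j i := fun i j => by
    conv_lhs => rw [← hA]
    rfl
  have h1 : ∀ (c : ℝ), ∑ x : Fin K, p x * c = c := fun c => by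
    rw [← Finset.sum_mul, hsum, one_mul]
  simp only [Finset.sum_apply, Pi.smul_apply, smul_eq_mul, Matrix.mulVec, dotProduct,
    Matrix.smul_apply, Matrix.add_apply, Matrix.sub_apply, Matrix.diagonal_apply,
    Matrix.vecMulVec_apply, Pi.add_apply, Pi.sub_apply, Pi.single_apply, smul_eq_mul,
    mul_ite, ite_mul, mul_zero, zero_mul, mul_one, one_mul,
    Finset.sum_ite_eq, Finset.sum_ite_eq', Finset.mem_univ, if_true,
    sub_mul, mul_sub, add_mul, mul_add, Finset.sum_add_distrib, Finset.sum_sub_distrib,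
    Finset.sum_ite_irrel, Finset.sum_const_zero, h1]
  have e1 : ∑ x : Fin K, p x * (2⁻¹ * p k * (2 * A k x)) = p k * ∑ x : Fin K, p x * A k x := by
    rw [Finset.mul_sum]; exact Finset.sum_congr rfl fun x _ => by ring
  have e2 : ∑ x : Fin K, p x * (2⁻¹ * p k * (2 * A x x)) = p k * ∑ x : Fin K, p x * A x x := by
    rw [Finset.mul_sum]; exact Finset.sum_congr rfl fun x _ => by ring
  have e3 : ∑ x : Fin K, 2⁻¹ * p x * (2 * A x k) = ∑ x : Fin K, p x * A k x :=
    Finset.sum_congr rfl fun x _ => by rw [hAs x k]; ring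
  have e4 : ∑ x : Fin K, p k * p x * A x x = p k * ∑ x : Fin K, p x * A x x := by
    rw [Finset.mul_sum]; exact Finset.sum_congr rfl fun x _ => by ring
  have e5 : ∑ x : Fin K, 2⁻¹ * (p k * p x) * b x = 2⁻¹ * (p k * ∑ x : Fin K, p x * b x) := by
    rw [Finset.mul_sum, Finset.mul_sum]; exact Finset.sum_congr rfl fun x _ => by ring
  have e6 : ∑ x : Fin K, p x * (2⁻¹ * p k * b x) = 2⁻¹ * (p k * ∑ x : Fin K, p x * b x) := by
    rw [Finset.mul_sum, Finset.mul_sum]; exact Finset.sum_congr rfl fun x _ => by ring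
  have e7 : ∑ x : Fin K, 2⁻¹ * p x * b x = 2⁻¹ * ∑ x : Fin K, p x * b x := by
    rw [Finset.mul_sum]; exact Finset.sum_congr rfl fun x _ => by ring
  have e8 : ∑ x : Fin K, p k * p x * b x = p k * ∑ x : Fin K, p x * b x := by
    rw [Finset.mul_sum]; exact Finset.sum_congr rfl fun x _ => by ring
  rw [e1, e2, e3, e4, e5, e6, e7, e8]
  ring
end

section
/- Let K ≥ 1, let p ∈ ℝ^K be a probability vector, and let g₁,…,g_K ∈ ℝ^K be arbitrary vectors. Then for every k ∈ {1,…,K}, the k-th coordinate of ∑_{i=1}^K p_i · ½·[C(p) + (e_i − p)(e_i − p)ᵀ]·g_i equals ½·∑_{j=1}^K p_k·p_j·⟨g_j + g_k, e_k − e_j⟩, where C(p) = Diag(p) − p·pᵀ. (With g_i = ∇f(e_i), the left side is the expectation of the ReinMax estimator and the right side is the second-order (trapezoidal/Heun) approximation of the gradient of the expectation of f under the categorical distribution with probability vector p.) -/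
open Matrix

/-- the expectation of the ReinMax estimator coincides coordinatewise with
the second-order (trapezoidal/Heun) approximation of the gradient:
`(∑_i p_i ½[C(p) + (e_i − p)(e_i − p)ᵀ] g_i)_k = ½ ∑_j p_k p_j ⟨g_j + g_k, e_k − e_j⟩`. -/
theorem reinmax_second_order_coordinate {K : ℕ} (hK : 1 ≤ K) (p : Fin K → ℝ)
    (hp : ∀ j, 0 ≤ p j) (hsum : ∑ j, p j = 1) (g : Fin K → Fin K → ℝ) (k : Fin K) :
    (∑ i, p i •
        ((2⁻¹ : ℝ) •
          ((Matrix.diagonal p - Matrix.vecMulVec p p) +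
            Matrix.vecMulVec ((Pi.single i 1 : Fin K → ℝ) - p)
              ((Pi.single i 1 : Fin K → ℝ) - p))).mulVec (g i)) k
      = 2⁻¹ * ∑ j, p k * p j *
          ((g j + g k) ⬝ᵥ ((Pi.single k 1 : Fin K → ℝ) - Pi.single j 1)) := by
  have hvm : ∀ (a b v : Fin K → ℝ) (x : Fin K),
      (Matrix.vecMulVec a b).mulVec v x = a x * (b ⬝ᵥ v) := by
    intro a b v x
    simp [Matrix.mulVec, Matrix.vecMulVec_apply, dotProduct, Finset.mul_sum, mul_assoc]
  have hdot : ∀ i : Fin K, (p ⬝ᵥ g i) = ∑ j, p j * g i j := fun i => rfl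
  have key : ∀ i : Fin K,
      (p i • ((2⁻¹ : ℝ) •
        ((Matrix.diagonal p - Matrix.vecMulVec p p) +
          Matrix.vecMulVec ((Pi.single i 1 : Fin K → ℝ) - p)
            ((Pi.single i 1 : Fin K → ℝ) - p))).mulVec (g i)) k
      = (2⁻¹ * p k * p i * g i k - 2⁻¹ * p k * p i * g i i)
        + (if i = k then 2⁻¹ * p i * g i i - ∑ j, 2⁻¹ * p i * (p j * g i j) else 0) := by
    intro i
    simp only [Matrix.smul_mulVec, Matrix.add_mulVec, Matrix.sub_mulVec,
      Pi.smul_apply, Pi.add_apply, Pi.sub_apply, smul_eq_mul,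
      Matrix.mulVec_diagonal, hvm, sub_dotProduct, single_dotProduct, one_mul]
    rw [hdot i]
    rcases eq_or_ne i k with h | h
    · subst h
      rw [if_pos rfl, Pi.single_eq_same,
        show (∑ j, 2⁻¹ * p i * (p j * g i j)) = 2⁻¹ * p i * ∑ j, p j * g i j by
          rw [Finset.mul_sum]]
      ring
    · rw [if_neg h, Pi.single_eq_of_ne (Ne.symm h)]
      ring
  have hrhs : ∀ j : Fin K,
      2⁻¹ * (p k * p j * ((g j + g k) ⬝ᵥ ((Pi.single k 1 : Fin K → ℝ) - Pi.single j 1)))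
      = (2⁻¹ * p k * p j * g j k - 2⁻¹ * p k * p j * g j j)
        + (2⁻¹ * p k * g k k * p j - 2⁻¹ * p k * (p j * g k j)) := by
    intro j
    rw [dotProduct_sub, dotProduct_single, dotProduct_single]
    simp only [Pi.add_apply, mul_one]
    ring
  rw [Finset.sum_apply, Finset.sum_congr rfl fun i _ => key i, Finset.sum_add_distrib,
    Finset.sum_ite_eq' Finset.univ k, Finset.sum_sub_distrib]
  simp only [Finset.mem_univ, if_pos]
  rw [Finset.mul_sum, Finset.sum_congr rfl fun j _ => hrhs j, Finset.sum_add_distrib,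
    Finset.sum_sub_distrib, Finset.sum_sub_distrib]
  have h1 : ∑ j, 2⁻¹ * p k * g k k * p j = 2⁻¹ * p k * g k k := by
    rw [← Finset.mul_sum, hsum, mul_one]
  rw [h1]
  try ring
end
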